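/- arXiv:1811.05131 — 2 statements merged into one kernel-verified Lean document; each statement's English description precedes it below -/
import Mathlib

section
/- Let n ≥ 1 and let w̄=(D̄,c̄,Ā,b̄,ᾱ) be a parameter of (QP_w) with D̄, Ā real symmetric n×n matrices, c̄,b̄ ∈ ℝⁿ, ᾱ ∈ ℝ. Suppose x̄ ∈ ℝⁿ satisfies F(x̄,w̄) < 0 and D̄x̄ + c̄ = 0, and that det D̄ ≠ 0. Then the stationary point set map S has the Robinson stability at ω₀=(x̄,w̄,0). -/
open Matrix

attribute [local instance] Matrix.normedAddCommGroup

noncomputable section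

/-- The Euclidean space `ℝⁿ`. -/
abbrev En (n : ℕ) := EuclideanSpace ℝ (Fin n)

/-- The parameter space `W` of the quadratic program `(QP_w)`:
a parameter is a tuple `w = (D, c, A, b, α)`. -/
abbrev QPParam (n : ℕ) :=
  Matrix (Fin n) (Fin n) ℝ × (Fin n → ℝ) × Matrix (Fin n) (Fin n) ℝ × (Fin n → ℝ) × ℝ

/-- The constraint function `F(x,w) = ½ xᵀAx + bᵀx + α`. -/
def Fq {n : ℕ} (w : QPParam n) (x : En n) : ℝ :=
  (1 / 2) * (w.2.2.1.mulVec x ⬝ᵥ x) + w.2.2.2.1 ⬝ᵥ x + w.2.2.2.2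

/-- The stationary (KKT) point set `S(w)` of `(QP_w)`. -/
def Sqp {n : ℕ} (w : QPParam n) : Set (En n) :=
  {x | Fq w x ≤ 0 ∧ ∃ μ : ℝ, 0 ≤ μ ∧
    w.1.mulVec x + w.2.1 + μ • (w.2.2.1.mulVec x + w.2.2.2.1) = (0 : Fin n → ℝ) ∧
    μ * Fq w x = 0}

/-- The set `Φ(x,w) = {Dx + c + μ(Ax + b) : μ ≥ 0, μ·F(x,w) = 0}` when `F(x,w) ≤ 0`
(and `∅` otherwise). -/
def PhiQP {n : ℕ} (x : En n) (w : QPParam n) : Set (En n) :=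
  {z | Fq w x ≤ 0 ∧ ∃ μ : ℝ, 0 ≤ μ ∧ μ * Fq w x = 0 ∧
    z = w.1.mulVec x + w.2.1 + μ • (w.2.2.1.mulVec x + w.2.2.2.1)}

/-- `S` has the Robinson stability at `ω₀ = (x0, w0, 0)`: there exist `r > 0`, `γ > 0`
and neighborhoods `U` of `x0`, `V` of `w0` such that `d(x, S(w)) ≤ r · d(0, Φ(x,w))`
for all `(x,w) ∈ U × V` with `Φ(x,w) ≠ ∅` and `d(0, Φ(x,w)) < γ`. -/
def RobinsonStableQP {n : ℕ} (w0 : QPParam n) (x0 : En n) : Prop :=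
  ∃ r : ℝ, 0 < r ∧ ∃ γ : ℝ, 0 < γ ∧ ∃ U ∈ nhds x0, ∃ V ∈ nhds w0,
    ∀ x ∈ U, ∀ w ∈ V, (PhiQP x w).Nonempty →
      Metric.infDist 0 (PhiQP x w) < γ →
      Metric.infDist x (Sqp w) ≤ r * Metric.infDist 0 (PhiQP x w)

/-!
Near `(x̄, w̄)` the constraint is inactive, so `Φ(x,w) = {Dx + c}`, and the unconstrained
stationary point `-D⁻¹c` of `(QP_w)` is close to `x̄`, hence strictly feasible and in `S(w)`.
Therefore `d(x, S(w)) ≤ ‖x + D⁻¹c‖ = ‖D⁻¹(Dx + c)‖ ≤ ‖D⁻¹‖ · d(0, Φ(x,w))`, and `‖D⁻¹‖` stays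
bounded near `D̄` because matrix inversion is continuous at the invertible `D̄`.
-/

open Filter Topology Metric WithLp

variable {n : ℕ}

lemma continuous_Fq : Continuous fun p : QPParam n × En n => Fq p.1 p.2 := by
  unfold Fq; fun_prop

lemma continuous_toEuclideanCLM :
    Continuous (toEuclideanCLM (𝕜 := ℝ) (n := Fin n)) :=
  (toEuclideanCLM (𝕜 := ℝ) (n := Fin n)).toAlgEquiv.toLinearMap
    |>.continuous_of_finiteDimensional

lemma continuousAt_fst_inv {w : QPParam n} (h : w.1.det ≠ 0) :
    ContinuousAt (fun w : QPParam n => w.1⁻¹) w :=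
  (continuousAt_matrix_inv _ (NormedRing.inverse_continuousAt h.isUnit.unit)).comp
    continuous_fst.continuousAt

lemma PhiQP_eq_singleton_of_Fq_neg {x : En n} {w : QPParam n} (h : Fq w x < 0) :
    PhiQP x w = {toLp 2 (w.1 *ᵥ x + w.2.1)} := by
  ext z
  simp only [PhiQP, Set.mem_ofPred_eq, Set.mem_singleton_iff, mul_eq_zero, h.ne, or_false]
  constructor
  · rintro ⟨-, μ, -, rfl, hz⟩
    ext i
    simp [hz]
  · rintro rfl
    exact ⟨h.le, 0, le_rfl, rfl, by simp⟩

lemma mem_Sqp_of_stationary {x : En n} {w : QPParam n} (hF : Fq w x ≤ 0)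
    (hx : w.1 *ᵥ x + w.2.1 = 0) : x ∈ Sqp w :=
  ⟨hF, 0, le_rfl, by simpa using hx, zero_mul _⟩

def unconstrainedStationaryPoint (w : QPParam n) : En n :=
  toLp 2 (-(w.1⁻¹ *ᵥ w.2.1))

lemma mulVec_unconstrainedStationaryPoint {w : QPParam n} (h : IsUnit w.1.det) :
    w.1 *ᵥ unconstrainedStationaryPoint w + w.2.1 = 0 := by
  simp [unconstrainedStationaryPoint, Matrix.mulVec_neg, Matrix.mulVec_mulVec,
    Matrix.mul_nonsing_inv _ h]

lemma sub_unconstrainedStationaryPoint {w : QPParam n} (h : IsUnit w.1.det) (x : En n) :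
    x - unconstrainedStationaryPoint w =
      toEuclideanCLM (𝕜 := ℝ) w.1⁻¹ (toLp 2 (w.1 *ᵥ x + w.2.1)) := by
  ext i
  simp [unconstrainedStationaryPoint, Matrix.mulVec_mulVec,
    Matrix.nonsing_inv_mul _ h]

lemma unconstrainedStationaryPoint_eq {w : QPParam n} (h : IsUnit w.1.det) {x : En n}
    (hx : w.1 *ᵥ x + w.2.1 = 0) : unconstrainedStationaryPoint w = x := by
  rw [eq_comm, ← sub_eq_zero, sub_unconstrainedStationaryPoint h, hx, toLp_zero, map_zero]

lemma continuousAt_unconstrainedStationaryPoint {w : QPParam n} (h : w.1.det ≠ 0) :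
    ContinuousAt unconstrainedStationaryPoint w := by
  have hmulVec : ContinuousAt (fun w : QPParam n => w.1⁻¹ *ᵥ w.2.1) w :=
    (continuous_fst.matrix_mulVec continuous_snd).continuousAt.comp
      ((continuousAt_fst_inv h).prodMk (continuous_fst.comp continuous_snd).continuousAt)
  exact (PiLp.continuous_toLp 2 _).continuousAt.comp hmulVec.neg

lemma infDist_Sqp_le {x : En n} {w : QPParam n} (hdet : IsUnit w.1.det) (hx : Fq w x < 0)
    (hs : Fq w (unconstrainedStationaryPoint w) ≤ 0) :
    infDist x (Sqp w) ≤ ‖toEuclideanCLM (𝕜 := ℝ) w.1⁻¹‖ * infDist 0 (PhiQP x w) := by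
  have hmem : unconstrainedStationaryPoint w ∈ Sqp w :=
    mem_Sqp_of_stationary hs (mulVec_unconstrainedStationaryPoint hdet)
  calc infDist x (Sqp w) ≤ ‖x - unconstrainedStationaryPoint w‖ :=
        (infDist_le_dist_of_mem hmem).trans_eq (dist_eq_norm _ _)
    _ ≤ ‖toEuclideanCLM (𝕜 := ℝ) w.1⁻¹‖ * ‖toLp 2 (w.1 *ᵥ x + w.2.1)‖ := by
        rw [sub_unconstrainedStationaryPoint hdet]
        exact ContinuousLinearMap.le_opNorm _ _
    _ = ‖toEuclideanCLM (𝕜 := ℝ) w.1⁻¹‖ * infDist 0 (PhiQP x w) := by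
        rw [PhiQP_eq_singleton_of_Fq_neg hx, infDist_singleton, dist_zero_left]

lemma robinsonStableQP_of_eventually {w0 : QPParam n} {x0 : En n} {r : ℝ} (hr : 0 < r)
    (h : ∀ᶠ p in 𝓝 x0 ×ˢ 𝓝 w0,
      infDist p.1 (Sqp p.2) ≤ r * infDist 0 (PhiQP p.1 p.2)) :
    RobinsonStableQP w0 x0 := by
  obtain ⟨U, hU, V, hV, hUV⟩ := mem_prod_iff.mp h
  refine ⟨r, hr, 1, one_pos, U, hU, V, hV, fun x hx w hw _ _ => ?_⟩
  exact @hUV (x, w) ⟨hx, hw⟩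

theorem stmt1_general {n : ℕ}
    (D A : Matrix (Fin n) (Fin n) ℝ) (c b : Fin n → ℝ) (α : ℝ) (x0 : En n)
    (hF : Fq (D, c, A, b, α) x0 < 0)
    (hstat : D.mulVec x0 + c = 0)
    (hdet : D.det ≠ 0) :
    RobinsonStableQP (D, c, A, b, α) x0 := by
  set w0 : QPParam n := (D, c, A, b, α)
  set r := ‖toEuclideanCLM (𝕜 := ℝ) D⁻¹‖ + 1
  have hx0 : unconstrainedStationaryPoint w0 = x0 :=
    unconstrainedStationaryPoint_eq hdet.isUnit hstat
  have hdet_ev : ∀ᶠ w in 𝓝 w0, IsUnit w.1.det :=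
    ((continuous_fst.matrix_det.continuousAt (x := w0)).eventually_ne hdet).mono
      fun _ => Ne.isUnit
  have hnorm_ev : ∀ᶠ w in 𝓝 w0, ‖toEuclideanCLM (𝕜 := ℝ) (n := Fin n) w.1⁻¹‖ < r :=
    (((continuous_toEuclideanCLM (n := n)).norm.continuousAt.comp
      (continuousAt_fst_inv (w := w0) hdet)).eventually_lt continuousAt_const (lt_add_one _))
  have hs_ev : ∀ᶠ w in 𝓝 w0, Fq w (unconstrainedStationaryPoint w) < 0 := by
    refine (continuous_Fq.continuousAt.comp
      (continuousAt_id.prodMk (continuousAt_unconstrainedStationaryPoint hdet))).eventually_lt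
      continuousAt_const ?_
    simpa [hx0] using hF
  have hx_ev : ∀ᶠ p in 𝓝 x0 ×ˢ 𝓝 w0, Fq p.2 p.1 < 0 := by
    rw [← nhds_prod_eq]
    exact (continuous_Fq.comp continuous_swap).continuousAt.eventually_lt continuousAt_const hF
  refine robinsonStableQP_of_eventually (r := r) (by positivity) ?_
  filter_upwards [hx_ev, (hdet_ev.and (hnorm_ev.and hs_ev)).prod_inr (𝓝 x0)]
    with ⟨x, w⟩ hx ⟨hw, hr, hs⟩
  exact (infDist_Sqp_le hw hx hs.le).trans (by gcongr; exact infDist_nonneg)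

/-- For `(QP_w)` with `F(x0,w0) < 0`, `D x0 + c = 0` and `det D ≠ 0`,
the stationary point set map `S` has the Robinson stability at `ω₀ = (x0, w0, 0)`. -/
theorem stmt1 {n : ℕ} (hn : 1 ≤ n)
    (D A : Matrix (Fin n) (Fin n) ℝ) (c b : Fin n → ℝ) (α : ℝ) (x0 : En n)
    (hD : D.IsSymm) (hA : A.IsSymm)
    (hF : Fq (D, c, A, b, α) x0 < 0)
    (hstat : D.mulVec x0 + c = 0)
    (hdet : D.det ≠ 0) :
    RobinsonStableQP (D, c, A, b, α) x0 :=
  stmt1_general D A c b α x0 hF hstat hdet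
end
end

section
/- Let f₀,F : ℝⁿ×ℝ^d → ℝ be C² functions and let (x̄,w̄) satisfy F(x̄,w̄) = 0, ∇ₓF(x̄,w̄) ≠ 0, and suppose there is λ > 0 with ∇ₓf₀(x̄,w̄)+λ∇ₓF(x̄,w̄) = 0. If the only pair (v,γ) ∈ ℝⁿ×ℝ satisfying (∇²ₓₓf₀(x̄,w̄)+λ∇²ₓₓF(x̄,w̄))v + γ∇ₓF(x̄,w̄) = 0 and ⟨∇ₓF(x̄,w̄), v⟩ = 0 is (0,0), then the stationary point set map S has a Lipschitz continuous single-valued localization around w̄ for x̄. -/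
/-!
Near `(x0, w0)` the multiplier is determined by `(x, w)` as `-⟪∇ₓF, ∇ₓf₀⟫ / ‖∇ₓF‖²`, which is
continuous and equals `lam > 0` at the base point; so the constraint stays active and `S(w)` is,
locally, the `x`-projection of the zero set of the KKT map `(w, x, μ) ↦ (∇ₓf₀ + μ ∇ₓF, F)`. The
regularity hypothesis says that the partial derivative of this map in `(x, μ)` is injective, hence
invertible, and the implicit function theorem yields a strictly differentiable, hence locally
Lipschitz, solution map.
-/

noncomputable section

/-- The partial gradient in `x` of a function `f : ℝⁿ × ℝ^d → ℝ`. -/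
def gradx {n d : ℕ} (f : En n × En d → ℝ) (x : En n) (w : En d) : En n :=
  gradient (fun y => f (y, w)) x

/-- The stationary (KKT) point set `S(w)` of the problem
`minimize f₀(x,w) subject to F(x,w) ≤ 0`. -/
def Sgen {n d : ℕ} (f₀ F : En n × En d → ℝ) (w : En d) : Set (En n) :=
  {x | F (x, w) ≤ 0 ∧ ∃ μ : ℝ, 0 ≤ μ ∧
    gradx f₀ x w + μ • gradx F x w = 0 ∧ μ * F (x, w) = 0}

/-- `S` has a Lipschitz continuous single-valued localization around `w0` for `x0`:
there are neighborhoods `V` of `w0`, `U` of `x0` and a Lipschitz continuous map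
`s` on `V` with `s(w0) = x0` and `S(w) ∩ U = {s(w)}` for every `w ∈ V`. -/
def HasLipschitzLocalization {n d : ℕ} (S : En d → Set (En n))
    (w0 : En d) (x0 : En n) : Prop :=
  ∃ V ∈ nhds w0, ∃ U ∈ nhds x0, ∃ s : En d → En n, ∃ K : NNReal,
    LipschitzOnWith K s V ∧ s w0 = x0 ∧ ∀ w ∈ V, S w ∩ U = {s w}

open Filter Topology ContinuousLinearMap RealInnerProductSpace

section ImplicitFunction

variable {𝕜 : Type*} [NontriviallyNormedField 𝕜]
  {E₁ : Type*} [NormedAddCommGroup E₁] [NormedSpace 𝕜 E₁] [CompleteSpace E₁]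
  {E₂ : Type*} [NormedAddCommGroup E₂] [NormedSpace 𝕜 E₂] [CompleteSpace E₂]
  {F : Type*} [NormedAddCommGroup F] [NormedSpace 𝕜 F] [CompleteSpace F]

theorem HasStrictFDerivAt.exists_lipschitzOnWith_implicitFunction {f : E₁ × E₂ → F}
    {f' : E₁ × E₂ →L[𝕜] F} {u : E₁ × E₂} (hf : HasStrictFDerivAt f f' u)
    (hf' : (f' ∘L inr 𝕜 E₁ E₂).IsInvertible) :
    ∃ ψ : E₁ → E₂, ψ u.1 = u.2 ∧ (∃ K, ∃ V ∈ 𝓝 u.1, LipschitzOnWith K ψ V) ∧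
      (∀ᶠ w in 𝓝 u.1, f (w, ψ w) = f u) ∧ ∀ᶠ v in 𝓝 u, f v = f u ↔ ψ v.1 = v.2 :=
  ⟨hf.implicitFunctionOfProdDomain hf',
    eq_of_tendsto_nhds (hf.tendsto_implicitFunctionOfProdDomain hf'),
    (hf.hasStrictFDerivAt_implicitFunctionOfProdDomain hf').exists_lipschitzOnWith,
    hf.eventually_apply_implicitFunctionOfProdDomain hf',
    hf.eventually_apply_eq_iff_implicitFunctionOfProdDomain hf'⟩

end ImplicitFunction

theorem ContinuousLinearMap.isInvertible_of_injective {𝕜 E : Type*} [NontriviallyNormedField 𝕜]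
    [CompleteSpace 𝕜] [NormedAddCommGroup E] [NormedSpace 𝕜 E] [FiniteDimensional 𝕜 E]
    {f : E →L[𝕜] E} (hf : Function.Injective f) : f.IsInvertible :=
  ⟨(LinearEquiv.ofInjectiveEndo f.toLinearMap hf).toContinuousLinearEquiv, rfl⟩

theorem eq_neg_inner_div_of_add_smul_eq_zero {E : Type*} [NormedAddCommGroup E]
    [InnerProductSpace ℝ E] {a b : E} {μ : ℝ} (hb : b ≠ 0) (h : a + μ • b = 0) :
    μ = -⟪b, a⟫ / ‖b‖ ^ 2 := by
  rw [add_eq_zero_iff_eq_neg.mp h, inner_neg_right, real_inner_smul_right,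
    real_inner_self_eq_norm_sq]
  field_simp [norm_ne_zero_iff.mpr hb]

section KKT

variable {n d : ℕ} {f₀ F : En n × En d → ℝ}

theorem contDiff_gradx {f : En n × En d → ℝ} (hf : ContDiff ℝ 2 f) :
    ContDiff ℝ 1 fun p : En n × En d => gradx f p.1 p.2 := by
  have hslice : ContDiff ℝ 1 fun p : En n × En d => fderiv ℝ (fun y => f (y, p.2)) p.1 :=
    ContDiff.fderiv (f := fun p y => f (y, p.2)) (hf.comp (by fun_prop)) contDiff_fst
      (by norm_num)
  exact (InnerProductSpace.toDual ℝ (En n)).symm.contDiff.comp hslice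

theorem inner_gradx (f : En n × En d → ℝ) (x : En n) (w : En d) (v : En n) :
    ⟪gradx f x w, v⟫ = fderiv ℝ (fun y => f (y, w)) x v :=
  InnerProductSpace.toDual_symm_apply

/-- The KKT system with an active constraint; the parameter `w` comes first, as in
`HasStrictFDerivAt.implicitFunctionOfProdDomain`. -/
def kktMap (f₀ F : En n × En d → ℝ) (p : En d × (En n × ℝ)) : En n × ℝ :=
  (gradx f₀ p.2.1 p.1 + p.2.2 • gradx F p.2.1 p.1, F (p.2.1, p.1))

theorem contDiff_kktMap (hf₀ : ContDiff ℝ 2 f₀) (hF : ContDiff ℝ 2 F) :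
    ContDiff ℝ 1 (kktMap f₀ F) := by
  have hxw : ContDiff ℝ 1 fun p : En d × (En n × ℝ) => (p.2.1, p.1) := by fun_prop
  exact (((contDiff_gradx hf₀).comp hxw).add
    (contDiff_snd.snd.smul ((contDiff_gradx hF).comp hxw))).prodMk
    ((hF.of_le (by norm_num)).comp hxw)

theorem injective_fderiv_kktMap_slice (hf₀ : ContDiff ℝ 2 f₀) (hF : ContDiff ℝ 2 F)
    {x0 : En n} {w0 : En d} {lam : ℝ}
    (hreg : ∀ (v : En n) (γ : ℝ),
      (fderiv ℝ (fun y => gradx f₀ y w0) x0) v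
        + lam • (fderiv ℝ (fun y => gradx F y w0) x0) v
        + γ • gradx F x0 w0 = 0 →
      ⟪gradx F x0 w0, v⟫ = 0 → v = 0 ∧ γ = 0) :
    Function.Injective (fderiv ℝ (fun z => kktMap f₀ F (w0, z)) (x0, lam)) := by
  have hslice {f : En n × En d → ℝ} (hf : ContDiff ℝ 2 f) :
      HasFDerivAt (fun y => gradx f y w0) (fderiv ℝ (fun y => gradx f y w0) x0) x0 :=
    (((contDiff_gradx hf).comp (contDiff_prodMk_left w0)).differentiable one_ne_zero
      x0).hasFDerivAt
  have hFx : HasFDerivAt (fun y => F (y, w0)) (fderiv ℝ (fun y => F (y, w0)) x0) x0 :=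
    ((hF.comp (contDiff_prodMk_left w0)).differentiable (by norm_num) x0).hasFDerivAt
  have hfst : HasFDerivAt Prod.fst (fst ℝ (En n) ℝ) (x0, lam) := hasFDerivAt_fst
  have hderiv : HasFDerivAt (fun z => kktMap f₀ F (w0, z)) _ (x0, lam) :=
    (((hslice hf₀).comp (x0, lam) hfst).add
      (hasFDerivAt_snd.smul ((hslice hF).comp (x0, lam) hfst))).prodMk
      (hFx.comp (x0, lam) hfst)
  rw [hderiv.fderiv, injective_iff_map_eq_zero]
  rintro ⟨v, γ⟩ h
  simp only [Prod.ext_iff, ContinuousLinearMap.prod_apply, add_apply, comp_apply, coe_fst',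
    smul_apply, smulRight_apply, coe_snd', Function.comp_apply, Prod.fst_zero,
    Prod.snd_zero] at h
  obtain ⟨hv, hγ⟩ := hreg v γ (by rw [← h.1]; abel) (by rw [inner_gradx, h.2])
  simp [hv, hγ]

def multiplier (f₀ F : En n × En d → ℝ) (p : En d × En n) : ℝ :=
  -⟪gradx F p.2 p.1, gradx f₀ p.2 p.1⟫ / ‖gradx F p.2 p.1‖ ^ 2

theorem multiplier_eq {x : En n} {w : En d} {μ : ℝ} (hF : gradx F x w ≠ 0)
    (h : gradx f₀ x w + μ • gradx F x w = 0) : multiplier f₀ F (w, x) = μ :=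
  (eq_neg_inner_div_of_add_smul_eq_zero hF h).symm

theorem mem_Sgen_iff_kktMap_eq_zero {x : En n} {w : En d} (hf₀x : gradx f₀ x w ≠ 0)
    (hFx : gradx F x w ≠ 0) (hμ : 0 < multiplier f₀ F (w, x)) :
    x ∈ Sgen f₀ F w ↔ kktMap f₀ F (w, (x, multiplier f₀ F (w, x))) = 0 := by
  simp only [kktMap, Prod.mk_eq_zero]
  constructor
  · rintro ⟨-, μ, -, hstat, hcompl⟩
    have hμ0 : μ ≠ 0 := by
      rintro rfl
      exact hf₀x (by simpa using hstat)
    rw [multiplier_eq hFx hstat]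
    exact ⟨hstat, (mul_eq_zero.mp hcompl).resolve_left hμ0⟩
  · rintro ⟨hstat, hactive⟩
    exact ⟨hactive.le, _, hμ.le, hstat, by rw [hactive, mul_zero]⟩

theorem continuousAt_multiplier (hf₀ : ContDiff ℝ 2 f₀) (hF : ContDiff ℝ 2 F) {x0 : En n}
    {w0 : En d} (hgF : gradx F x0 w0 ≠ 0) : ContinuousAt (multiplier f₀ F) (w0, x0) := by
  have hgrad {f : En n × En d → ℝ} (hf : ContDiff ℝ 2 f) :
      Continuous fun p : En d × En n => gradx f p.2 p.1 :=
    (contDiff_gradx hf).continuous.comp continuous_swap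
  exact ((hgrad hF).inner (hgrad hf₀)).neg.continuousAt.div
    ((hgrad hF).norm.pow 2).continuousAt (pow_ne_zero 2 (norm_ne_zero_iff.mpr hgF))

theorem eventually_mem_Sgen_iff_kktMap_eq_zero (hf₀ : ContDiff ℝ 2 f₀) (hF : ContDiff ℝ 2 F)
    {x0 : En n} {w0 : En d} {lam : ℝ} (hgF : gradx F x0 w0 ≠ 0) (hlam : 0 < lam)
    (hKKT : gradx f₀ x0 w0 + lam • gradx F x0 w0 = 0) :
    ∀ᶠ p in 𝓝 (w0, x0),
      p.2 ∈ Sgen f₀ F p.1 ↔ kktMap f₀ F (p.1, (p.2, multiplier f₀ F p)) = 0 := by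
  have hgrad {f : En n × En d → ℝ} (hf : ContDiff ℝ 2 f) (hf0 : gradx f x0 w0 ≠ 0) :
      ∀ᶠ p in 𝓝 (w0, x0), gradx f p.2 p.1 ≠ 0 :=
    ((contDiff_gradx hf).continuous.comp continuous_swap).continuousAt.eventually_ne hf0
  have hf₀0 : gradx f₀ x0 w0 ≠ 0 := by
    rw [eq_neg_of_add_eq_zero_left hKKT, neg_ne_zero]
    exact smul_ne_zero hlam.ne' hgF
  have hμ : ∀ᶠ p in 𝓝 (w0, x0), 0 < multiplier f₀ F p :=
    (continuousAt_multiplier hf₀ hF hgF).eventually_const_lt (multiplier_eq hgF hKKT ▸ hlam)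
  filter_upwards [hgrad hf₀ hf₀0, hgrad hF hgF, hμ] with p hf₀p hFp hμp
  exact mem_Sgen_iff_kktMap_eq_zero hf₀p hFp hμp

theorem eventually_mem_Sgen_iff_fst_eq (hf₀ : ContDiff ℝ 2 f₀) (hF : ContDiff ℝ 2 F)
    {x0 : En n} {w0 : En d} {lam : ℝ} (hgF : gradx F x0 w0 ≠ 0) (hlam : 0 < lam)
    (hKKT : gradx f₀ x0 w0 + lam • gradx F x0 w0 = 0) {ψ : En d → En n × ℝ}
    (hψ0 : ψ w0 = (x0, lam)) (hψc : ContinuousAt ψ w0)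
    (hψsol : ∀ᶠ w in 𝓝 w0, kktMap f₀ F (w, ψ w) = 0)
    (hψ : ∀ᶠ q in 𝓝 (w0, (x0, lam)), kktMap f₀ F q = 0 ↔ ψ q.1 = q.2) :
    ∀ᶠ p in 𝓝 (w0, x0), p.2 ∈ Sgen f₀ F p.1 ↔ (ψ p.1).1 = p.2 := by
  have hgraph : ∀ᶠ p in 𝓝 (w0, x0),
      kktMap f₀ F (p.1, (p.2, multiplier f₀ F p)) = 0 ↔ ψ p.1 = (p.2, multiplier f₀ F p) := by
    have hψ' : ∀ᶠ q in 𝓝 (w0, (x0, multiplier f₀ F (w0, x0))),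
        kktMap f₀ F q = 0 ↔ ψ q.1 = q.2 := by
      rwa [multiplier_eq hgF hKKT]
    exact (continuousAt_fst.prodMk
      (continuousAt_snd.prodMk (continuousAt_multiplier hf₀ hF hgF))).eventually hψ'
  have hψF : ∀ᶠ w in 𝓝 w0, gradx F (ψ w).1 w ≠ 0 := by
    have hc := (contDiff_gradx hF).continuous.continuousAt.comp (hψc.fst.prodMk continuousAt_id)
    exact hc.eventually_ne (by simpa [hψ0] using hgF)
  filter_upwards [eventually_mem_Sgen_iff_kktMap_eq_zero hf₀ hF hgF hlam hKKT, hgraph,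
    continuousAt_fst.eventually (hψsol.and hψF)] with p hS hgraph ⟨hsol, hψFp⟩
  rw [hS, hgraph]
  refine ⟨fun h => by rw [h], fun h => Prod.ext h ?_⟩
  change (ψ p.1).2 = multiplier f₀ F (p.1, p.2)
  rw [← h]
  exact (multiplier_eq hψFp (congrArg Prod.fst hsol)).symm

end KKT

theorem hasLipschitzLocalization_of_eventually_iff {n d : ℕ} {S : En d → Set (En n)}
    {w0 : En d} {x0 : En n} {s : En d → En n} {K : NNReal} {V : Set (En d)} (hV : V ∈ 𝓝 w0)
    (hs : LipschitzOnWith K s V) (hs0 : s w0 = x0)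
    (h : ∀ᶠ p in 𝓝 (w0, x0), p.2 ∈ S p.1 ↔ s p.1 = p.2) :
    HasLipschitzLocalization S w0 x0 := by
  obtain ⟨V', hV', U, hU, hVU⟩ := mem_nhds_prod_iff.mp h
  have hsU : s ⁻¹' U ∈ 𝓝 w0 := (hs.continuousOn.continuousAt hV).preimage_mem_nhds (hs0 ▸ hU)
  refine ⟨V ∩ V' ∩ s ⁻¹' U, inter_mem (inter_mem hV hV') hsU, U, hU, s, K,
    hs.mono fun w hw => hw.1.1, hs0, ?_⟩
  rintro w ⟨⟨-, hw⟩, hsw⟩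
  ext x
  constructor
  · rintro ⟨hx, hxU⟩
    exact ((hVU (Set.mk_mem_prod hw hxU)).1 hx).symm
  · rintro rfl
    exact ⟨(hVU (Set.mk_mem_prod hw hsw)).2 rfl, hsw⟩

open RealInnerProductSpace in
/-- If `F(x0,w0) = 0`, `∇ₓF(x0,w0) ≠ 0`, the Lagrange multiplier
`λ > 0`, and the only `(v,γ)` with `(∇²ₓₓf₀ + λ∇²ₓₓF)v + γ∇ₓF = 0` and `⟨∇ₓF, v⟩ = 0`
is `(0,0)`, then `S` has a Lipschitz continuous single-valued localization
around `w0` for `x0`. -/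
theorem stmt10 {n d : ℕ} (f₀ F : En n × En d → ℝ)
    (hf₀ : ContDiff ℝ 2 f₀) (hF : ContDiff ℝ 2 F)
    (x0 : En n) (w0 : En d) (lam : ℝ)
    (hFeq : F (x0, w0) = 0)
    (hgF : gradx F x0 w0 ≠ 0)
    (hlam : 0 < lam)
    (hKKT : gradx f₀ x0 w0 + lam • gradx F x0 w0 = 0)
    (hreg : ∀ (v : En n) (γ : ℝ),
      (fderiv ℝ (fun y => gradx f₀ y w0) x0) v
        + lam • (fderiv ℝ (fun y => gradx F y w0) x0) v
        + γ • gradx F x0 w0 = 0 →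
      ⟪gradx F x0 w0, v⟫ = 0 → v = 0 ∧ γ = 0) :
    HasLipschitzLocalization (Sgen f₀ F) w0 x0 := by
  have hΦ := contDiff_kktMap hf₀ hF
  have hu : kktMap f₀ F (w0, (x0, lam)) = 0 := by simp [kktMap, hKKT, hFeq]
  have hinv : (fderiv ℝ (kktMap f₀ F) (w0, (x0, lam)) ∘L inr ℝ _ _).IsInvertible := by
    rw [← ((hΦ.differentiable one_ne_zero _).hasFDerivAt.comp (x0, lam)
      (hasFDerivAt_prodMk_right w0 (x0, lam))).fderiv]
    exact isInvertible_of_injective (injective_fderiv_kktMap_slice hf₀ hF hreg)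
  obtain ⟨ψ, hψ0, ⟨K, V, hV, hψV⟩, hψsol, hψ⟩ :=
    (hΦ.contDiffAt.hasStrictFDerivAt one_ne_zero).exists_lipschitzOnWith_implicitFunction hinv
  rw [hu] at hψsol hψ
  exact hasLipschitzLocalization_of_eventually_iff hV
    (LipschitzWith.prod_fst.comp_lipschitzOnWith hψV) (congrArg Prod.fst hψ0)
    (eventually_mem_Sgen_iff_fst_eq hf₀ hF hgF hlam hKKT hψ0
      (hψV.continuousOn.continuousAt hV) hψsol hψ)
end
end
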